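/- arXiv:2601.06370 — 5 statements merged into one kernel-verified Lean document; each statement's English description precedes it below -/
import Mathlib

section
/- For n ≥ 2, the matrix -C_n^- admits the product decomposition -C_n^- = diag(X^{⊗(n-1)}, I) · (I_2 ⊗ C_{n-1}(Z)) · antidiag(I, X^{⊗(n-1)}), where C_{n-1}(Z) = diag(1, ..., 1, -1) is the 2^{n-1} × 2^{n-1} multicontrolled-Z matrix, diag(A, B) denotes the block-diagonal matrix, and antidiag(A, B) denotes the block matrix [[0, A],[B, 0]]. -/
open Matrix

/-- The signed exchange matrix `C_n^-`: `+1` at the two anti-diagonal corners,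
`-1` at the interior anti-diagonal entries, `0` elsewhere. -/
def Cnm (n : ℕ) : Matrix (Fin (2^n)) (Fin (2^n)) ℝ :=
  Matrix.of fun i j =>
    if ((i : ℕ) = 0 ∧ (j : ℕ) = 2^n - 1) ∨ ((i : ℕ) = 2^n - 1 ∧ (j : ℕ) = 0) then 1
    else if (i : ℕ) + (j : ℕ) = 2^n - 1 then -1 else 0

/-- The exchange matrix of size `m` (ones on the anti-diagonal). -/
def Xm (m : ℕ) : Matrix (Fin m) (Fin m) ℝ :=
  Matrix.of fun i j => if (i : ℕ) + (j : ℕ) = m - 1 then 1 else 0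

/-- The multicontrolled-Z matrix of size `m`: `diag(1, ..., 1, -1)`. -/
def CZ (m : ℕ) : Matrix (Fin m) (Fin m) ℝ :=
  Matrix.of fun i j => if i = j then (if (i : ℕ) = m - 1 then -1 else 1) else 0

/-! Multiplying out the blocks, the product is `antidiag(X * C(Z), C(Z) * X)`. Both factors are
the exchange matrix with one sign flipped, in the last column resp. the last row; these are
exactly the two corners of the anti-diagonal where `-C_{n+1}^-` carries `-1`. -/

lemma Xm_mul_CZ (m : ℕ) :
    Xm m * CZ m = of fun (i j : Fin m) =>
      if (i : ℕ) + j = m - 1 then (if (j : ℕ) = m - 1 then -1 else 1) else 0 := by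
  ext i j
  rw [mul_apply, Finset.sum_eq_single j (fun k _ hk => by simp [CZ, hk]) (by simp)]
  simp only [Xm, CZ, of_apply]
  split_ifs <;> norm_num

lemma CZ_mul_Xm (m : ℕ) :
    CZ m * Xm m = of fun (i j : Fin m) =>
      if (i : ℕ) + j = m - 1 then (if (i : ℕ) = m - 1 then -1 else 1) else 0 := by
  ext i j
  rw [mul_apply, Finset.sum_eq_single i (fun k _ hk => by simp [CZ, hk.symm]) (by simp)]
  simp only [Xm, CZ, of_apply]
  split_ifs <;> norm_num

lemma neg_Cnm_apply (n : ℕ) (i j : Fin (2 ^ n)) :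
    (-Cnm n) i j =
      if (i : ℕ) + j = 2 ^ n - 1 then (if (i : ℕ) = 0 ∨ (j : ℕ) = 0 then -1 else 1)
      else 0 := by
  have := i.isLt
  have := j.isLt
  rw [neg_apply, Cnm, of_apply]
  split_ifs <;> first | omega | norm_num

lemma fromBlocks_mul_fromBlocks_mul_antidiag {l α : Type*} [Fintype l] [DecidableEq l]
    [Semiring α] (A D B : Matrix l l α) :
    fromBlocks A 0 0 1 * fromBlocks D 0 0 D * fromBlocks 0 1 B 0 =
      fromBlocks 0 (A * D) (D * B) 0 := by
  rw [fromBlocks_multiply, fromBlocks_multiply]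
  simp

theorem stmt_6_general (n : ℕ) (h : 2^n + 2^n = 2^(n+1)) :
    -(Cnm (n+1)) =
      Matrix.reindex (finSumFinEquiv.trans (finCongr h)) (finSumFinEquiv.trans (finCongr h))
        (Matrix.fromBlocks (Xm (2^n)) 0 0 1 *
          Matrix.fromBlocks (CZ (2^n)) 0 0 (CZ (2^n)) *
          Matrix.fromBlocks 0 1 (Xm (2^n)) 0) := by
  rw [eq_comm, ← Equiv.eq_symm_apply, reindex_symm, reindex_apply,
    fromBlocks_mul_fromBlocks_mul_antidiag, Xm_mul_CZ, CZ_mul_Xm]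
  ext (i | i) (j | j) <;>
  · have := i.isLt
    have := j.isLt
    have := pow_succ 2 n
    simp only [submatrix_apply, neg_Cnm_apply, Equiv.symm_symm, Equiv.trans_apply,
      finSumFinEquiv_apply_left, finSumFinEquiv_apply_right, finCongr_apply, Fin.val_cast,
      Fin.val_castAdd, Fin.val_natAdd, fromBlocks_apply₁₁, fromBlocks_apply₁₂,
      fromBlocks_apply₂₁, fromBlocks_apply₂₂, of_apply, Matrix.zero_apply]
    split_ifs <;> first | rfl | omega

theorem stmt_6 (n : ℕ) (hn : 1 ≤ n) (h : 2^n + 2^n = 2^(n+1)) :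
    -(Cnm (n+1)) =
      Matrix.reindex (finSumFinEquiv.trans (finCongr h)) (finSumFinEquiv.trans (finCongr h))
        (Matrix.fromBlocks (Xm (2^n)) 0 0 1 *
          Matrix.fromBlocks (CZ (2^n)) 0 0 (CZ (2^n)) *
          Matrix.fromBlocks 0 1 (Xm (2^n)) 0) :=
  stmt_6_general n h
end

section
/- The Dirichlet Laplacian A_{n,1} admits the five-term linear combination of unitaries A_{n,1} = -2·I^{⊗n} + S_n + S_n^† - (1/2)·X^{⊗n} - (1/2)·C_n^-, where each of the five matrices I^{⊗n}, S_n, S_n^†, X^{⊗n}, C_n^- is unitary. -/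
open Matrix

/-- The discrete Dirichlet Laplacian: tridiagonal with `-2` on the diagonal and
`1` on the sub- and super-diagonals. -/
def A1 (n : ℕ) : Matrix (Fin (2^n)) (Fin (2^n)) ℝ :=
  Matrix.of fun i j =>
    if (i : ℕ) = (j : ℕ) then -2
    else if (i : ℕ) + 1 = (j : ℕ) ∨ (j : ℕ) + 1 = (i : ℕ) then 1 else 0

/-- The cyclic increment matrix: `(S_n)_{i,j} = 1` iff `i ≡ j + 1 (mod 2^n)`. -/
def Sn (n : ℕ) : Matrix (Fin (2^n)) (Fin (2^n)) ℝ :=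
  Matrix.of fun i j => if (i : ℕ) = ((j : ℕ) + 1) % 2^n then 1 else 0

/-- `X^{⊗n}`: the exchange matrix of size `2^n` (ones on the anti-diagonal). -/
def Xpow (n : ℕ) : Matrix (Fin (2^n)) (Fin (2^n)) ℝ :=
  Matrix.of fun i j => if (i : ℕ) + (j : ℕ) = 2^n - 1 then 1 else 0

/-!
`X^{⊗n} + C_n^-` vanishes off the two corners `(0, 2^n - 1)`, `(2^n - 1, 0)`, where it equals `2`,
and `S_n + S_n^† - 2 I` is the periodic Laplacian, which differs from the Dirichlet Laplacian
`A_{n,1}` by exactly these two corner entries. As for unitarity, `S_n`, `S_n^†` and `X^{⊗n}` are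
permutation matrices, and `C_n^-` is `X^{⊗n}` times a diagonal matrix of signs.
-/

namespace Matrix

variable {ι R : Type*} [Fintype ι] [DecidableEq ι]

theorem permMatrix_mul_transpose_self [NonAssocSemiring R] (σ : Equiv.Perm ι) :
    σ.permMatrix R * (σ.permMatrix R)ᵀ = 1 := by
  rw [transpose_permMatrix, ← permMatrix_mul, inv_mul_cancel, permMatrix_one]

theorem mul_diagonal_mul_transpose_self [CommSemiring R] {U : Matrix ι ι R} (hU : U * Uᵀ = 1)
    {d : ι → R} (hd : ∀ i, d i * d i = 1) : U * diagonal d * (U * diagonal d)ᵀ = 1 := by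
  have hdd : diagonal d * diagonal d = 1 := by
    rw [diagonal_mul_diagonal, ← diagonal_one]
    exact congrArg diagonal (funext hd)
  rw [transpose_mul, diagonal_transpose, Matrix.mul_assoc, ← Matrix.mul_assoc (diagonal d), hdd,
    Matrix.one_mul, hU]

end Matrix

theorem transpose_Sn (n : ℕ) : (Sn n)ᵀ = (finRotate (2^n)).permMatrix ℝ := by
  ext i j
  have hrot : ((finRotate (2^n) i : Fin (2^n)) : ℕ) = ((i : ℕ) + 1) % 2^n := by
    rw [finRotate_apply, Fin.val_add, Fin.val_one']
    simp [Nat.add_mod]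
  simp only [transpose_apply, Sn, of_apply, PEquiv.toMatrix_apply, Equiv.toPEquiv_apply,
    Option.mem_def, Option.some_inj, Fin.ext_iff, hrot, eq_comm]

theorem Sn_eq_permMatrix (n : ℕ) : Sn n = (finRotate (2^n))⁻¹.permMatrix ℝ := by
  rw [← transpose_transpose (Sn n), transpose_Sn, transpose_permMatrix]

theorem Xpow_eq_permMatrix (n : ℕ) :
    Xpow n = (Fin.revPerm : Equiv.Perm (Fin (2^n))).permMatrix ℝ := by
  ext i j
  have hrev : (i : ℕ) + j = 2^n - 1 ↔ i.rev = j := by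
    rw [Fin.ext_iff, Fin.val_rev]; omega
  simp [Xpow, PEquiv.toMatrix_apply, hrev]

def cornerSign (n : ℕ) (j : Fin (2^n)) : ℝ :=
  if (j : ℕ) = 0 ∨ (j : ℕ) = 2^n - 1 then 1 else -1

theorem Cnm_eq_Xpow_mul_diagonal (n : ℕ) : Cnm n = Xpow n * diagonal (cornerSign n) := by
  ext i j
  have := i.isLt
  simp only [Cnm, Xpow, cornerSign, of_apply, mul_diagonal]
  split_ifs <;> first | (exfalso; omega) | norm_num

theorem cornerSign_mul_self (n : ℕ) (j : Fin (2^n)) : cornerSign n j * cornerSign n j = 1 := by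
  unfold cornerSign; split_ifs <;> norm_num

def cornerMatrix (n : ℕ) : Matrix (Fin (2^n)) (Fin (2^n)) ℝ :=
  Matrix.of fun i j =>
    if ((i : ℕ) = 0 ∧ (j : ℕ) = 2^n - 1) ∨ ((i : ℕ) = 2^n - 1 ∧ (j : ℕ) = 0) then 1 else 0

theorem Xpow_add_Cnm (n : ℕ) : Xpow n + Cnm n = (2 : ℝ) • cornerMatrix n := by
  ext i j
  simp only [Xpow, Cnm, cornerMatrix, Matrix.add_apply, Matrix.smul_apply, of_apply, smul_eq_mul]
  split_ifs <;> first | (exfalso; omega) | norm_num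

theorem A1_add_cornerMatrix (n : ℕ) (hn : 1 ≤ n) :
    A1 n + cornerMatrix n = (-2 : ℝ) • 1 + Sn n + (Sn n)ᵀ := by
  have h2 : 2 ≤ 2^n := le_self_pow₀ one_le_two (by omega)
  have hsucc : ∀ k : Fin (2^n), ((k : ℕ) + 1) % 2^n =
      if (k : ℕ) + 1 = 2^n then 0 else (k : ℕ) + 1 := by
    intro k
    split_ifs with h
    · rw [h, Nat.mod_self]
    · exact Nat.mod_eq_of_lt (by omega)
  ext i j
  have := i.isLt; have := j.isLt
  simp only [A1, Sn, cornerMatrix, Matrix.add_apply, Matrix.smul_apply, one_apply,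
    transpose_apply, of_apply, smul_eq_mul, Fin.ext_iff, hsucc]
  split_ifs <;> first | (exfalso; omega) | norm_num

theorem A1_eq_linear_combination (n : ℕ) (hn : 1 ≤ n) :
    A1 n = (-2 : ℝ) • (1 : Matrix (Fin (2^n)) (Fin (2^n)) ℝ) + Sn n + (Sn n)ᵀ
        - (1/2 : ℝ) • Xpow n - (1/2 : ℝ) • Cnm n := by
  rw [sub_sub, ← smul_add, Xpow_add_Cnm, smul_smul, ← A1_add_cornerMatrix n hn]
  norm_num

theorem stmt_7 (n : ℕ) (hn : 1 ≤ n) :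
    A1 n = (-2 : ℝ) • (1 : Matrix (Fin (2^n)) (Fin (2^n)) ℝ) + Sn n + (Sn n)ᵀ
        - (1/2 : ℝ) • Xpow n - (1/2 : ℝ) • Cnm n ∧
    ((1 : Matrix (Fin (2^n)) (Fin (2^n)) ℝ) * (1 : Matrix (Fin (2^n)) (Fin (2^n)) ℝ)ᵀ = 1) ∧
    (Sn n * (Sn n)ᵀ = 1) ∧ ((Sn n)ᵀ * ((Sn n)ᵀ)ᵀ = 1) ∧
    (Xpow n * (Xpow n)ᵀ = 1) ∧ (Cnm n * (Cnm n)ᵀ = 1) := by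
  refine ⟨A1_eq_linear_combination n hn, by simp, ?_, ?_, ?_, ?_⟩
  · rw [Sn_eq_permMatrix]
    exact permMatrix_mul_transpose_self _
  · rw [transpose_Sn]
    exact permMatrix_mul_transpose_self _
  · rw [Xpow_eq_permMatrix]
    exact permMatrix_mul_transpose_self _
  · rw [Cnm_eq_Xpow_mul_diagonal, Xpow_eq_permMatrix]
    exact mul_diagonal_mul_transpose_self (permMatrix_mul_transpose_self _) (cornerSign_mul_self n)
end

section
/- Let E_n = A_{n,3} - A_{n,1} be the 2^n × 2^n matrix with entries (E_n)_{0,0} = 2a_0h, (E_n)_{0,1} = 1, (E_n)_{2^n-1, 2^n-2} = 1, (E_n)_{2^n-1, 2^n-1} = -2a_1h, and zeros elsewhere. Then E_n = 2a_0h·τ_0^{⊗n} - 2a_1h·τ_3^{⊗n} + X^{⊗n}·C_n·(I^{⊗(n-1)} ⊗ X), where τ_0 = diag(1,0), τ_3 = diag(0,1), C_n is the matrix with ones at positions (0, 2^n-1) and (2^n-1, 0) only, and X^{⊗n} is the exchange matrix. -/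
open Matrix

/-- The Neumann/Robin matrix: first row `(-2+2a₀h, 2, 0, ...)`, last row
`(..., 0, 2, -2-2a₁h)`, interior rows identical to the Dirichlet Laplacian. -/
def A3 (n : ℕ) (a0 a1 h : ℝ) : Matrix (Fin (2^n)) (Fin (2^n)) ℝ :=
  Matrix.of fun i j =>
    if (i : ℕ) = 0 ∧ (j : ℕ) = 0 then -2 + 2*a0*h
    else if (i : ℕ) = 0 ∧ (j : ℕ) = 1 then 2
    else if (i : ℕ) = 2^n - 1 ∧ (j : ℕ) = 2^n - 2 then 2
    else if (i : ℕ) = 2^n - 1 ∧ (j : ℕ) = 2^n - 1 then -2 - 2*a1*h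
    else if (i : ℕ) = (j : ℕ) then -2
    else if (i : ℕ) + 1 = (j : ℕ) ∨ (j : ℕ) + 1 = (i : ℕ) then 1 else 0

/-- `τ₀^{⊗n}`: the matrix with a single `1` in entry `(0,0)`. -/
def Tau0 (n : ℕ) : Matrix (Fin (2^n)) (Fin (2^n)) ℝ :=
  Matrix.of fun i j => if (i : ℕ) = 0 ∧ (j : ℕ) = 0 then 1 else 0

/-- `τ₃^{⊗n}`: the matrix with a single `1` in entry `(2^n-1, 2^n-1)`. -/
def Tau3 (n : ℕ) : Matrix (Fin (2^n)) (Fin (2^n)) ℝ :=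
  Matrix.of fun i j => if (i : ℕ) = 2^n - 1 ∧ (j : ℕ) = 2^n - 1 then 1 else 0

/-- The corner matrix `C_n` with ones at `(0, 2^n-1)` and `(2^n-1, 0)` only. -/
def Cn (n : ℕ) : Matrix (Fin (2^n)) (Fin (2^n)) ℝ :=
  Matrix.of fun i j =>
    if ((i : ℕ) = 0 ∧ (j : ℕ) = 2^n - 1) ∨ ((i : ℕ) = 2^n - 1 ∧ (j : ℕ) = 0) then 1 else 0

/-- `I^{⊗(n-1)} ⊗ X`: the permutation matrix flipping the last bit. -/
def IX (n : ℕ) : Matrix (Fin (2^n)) (Fin (2^n)) ℝ :=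
  Matrix.of fun i j => if (i : ℕ) / 2 = (j : ℕ) / 2 ∧ (i : ℕ) ≠ (j : ℕ) then 1 else 0

/-! The diagonal corrections of `E_n` are the rank-one corners `τ₀^{⊗n}`, `τ₃^{⊗n}`. For the
off-diagonal ones: `X^{⊗n}` reverses the rows of `C_n` and `I^{⊗(n-1)} ⊗ X` swaps each column with
its sibling `j ^^^ 1`, so the corner `(2^n-1, 0)` lands at `(0, 1)` and `(0, 2^n-1)` at
`(2^n-1, 2^n-2)`; this uses that `2^n` is even. -/

lemma Xpow_mul_apply {n : ℕ} (M : Matrix (Fin (2^n)) (Fin (2^n)) ℝ) (i j : Fin (2^n)) :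
    (Xpow n * M) i j = M i.rev j := by
  rw [mul_apply, Finset.sum_eq_single i.rev]
  · have : (i : ℕ) + i.rev = 2^n - 1 := by rw [Fin.val_rev]; omega
    simp only [Xpow, of_apply, this, if_true, one_mul]
  · intro k _ hk
    have : (i : ℕ) + k ≠ 2^n - 1 := fun h => hk (Fin.ext (by rw [Fin.val_rev]; omega))
    simp [Xpow, this]
  · simp

lemma mul_IX_apply {n : ℕ} (M : Matrix (Fin (2^n)) (Fin (2^n)) ℝ) {j k : Fin (2^n)}
    (hk : (k : ℕ) / 2 = (j : ℕ) / 2 ∧ k ≠ j) (i : Fin (2^n)) :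
    (M * IX n) i j = M i k := by
  rw [mul_apply, Finset.sum_eq_single k]
  · simp [IX, hk.1, Fin.val_ne_iff.mpr hk.2]
  · intro l _ hl
    have : ¬((l : ℕ) / 2 = (j : ℕ) / 2 ∧ (l : ℕ) ≠ j) := by
      rintro ⟨hlj, hne⟩
      exact hl (Fin.ext (by have := Fin.val_ne_iff.mpr hk.2; omega))
    simp [IX, this]
  · simp

lemma exists_sibling {n : ℕ} (hn : 1 ≤ n) (j : Fin (2^n)) :
    ∃ k : Fin (2^n), (k : ℕ) / 2 = (j : ℕ) / 2 ∧ k ≠ j := by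
  have heven : 2 ∣ 2^n := dvd_pow_self 2 (by omega)
  refine ⟨⟨if (j : ℕ) % 2 = 0 then j + 1 else j - 1, ?_⟩, ?_, ?_⟩
  · have := j.isLt
    split_ifs <;> omega
  · split_ifs <;> simp only <;> omega
  · intro h
    have := congrArg Fin.val h
    split_ifs at this <;> simp only at this <;> omega

theorem stmt_8 (n : ℕ) (hn : 2 ≤ n) (a0 a1 h : ℝ) :
    A3 n a0 a1 h - A1 n =
      (2*a0*h) • Tau0 n - (2*a1*h) • Tau3 n + Xpow n * Cn n * IX n := by
  have h4 : 4 ≤ 2^n := by simpa using Nat.pow_le_pow_right two_pos hn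
  have heven : 2 ∣ 2^n := dvd_pow_self 2 (by omega)
  ext i j
  obtain ⟨k, hkj, hne⟩ := exists_sibling (by omega) j
  have hne' := Fin.val_ne_iff.mpr hne
  have hi := i.isLt
  have hj := j.isLt
  simp only [Matrix.sub_apply, Matrix.add_apply, Matrix.smul_apply, smul_eq_mul,
    mul_IX_apply _ ⟨hkj, hne⟩, Xpow_mul_apply, A3, A1, Tau0, Tau3, Cn, of_apply, Fin.val_rev]
  split_ifs <;> first | (exfalso; omega) | ring
end

section
/- The rank-one projection τ_0^{⊗n} = |0⟩⟨0|^{⊗n} (the 2^n × 2^n matrix with a single 1 in entry (0,0)) admits the four-term unitary decomposition τ_0^{⊗n} = (1/4)·[ I^{⊗n} + I^{⊗(n-1)} ⊗ Z + X^{⊗n}·C_n^- + X^{⊗n}·C_n^-·(I^{⊗(n-1)} ⊗ Z) ]. -/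
open Matrix

/-- `I^{⊗(n-1)} ⊗ Z`: the diagonal matrix whose j-th diagonal entry is `1` if
`j` is even and `-1` if `j` is odd. -/
def IZ (n : ℕ) : Matrix (Fin (2^n)) (Fin (2^n)) ℝ :=
  Matrix.of fun i j => if i = j then (if (i : ℕ) % 2 = 0 then 1 else -1) else 0

/-!
Both `Xpow n * Cnm n` and `IZ n` are diagonal with entries `±1`, so the bracket factors as
`(1 + Xpow n * Cnm n) * (1 + IZ n)`, a diagonal matrix whose `i`-th entry is nonzero exactly when
`i ∈ {0, 2^n - 1}` (where `Xpow n * Cnm n` has entry `1`) and `i` is even (where `IZ n` has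
entry `1`). As `2^n - 1` is odd for `n ≥ 1`, only `i = 0` survives, with entry `4`.
-/

lemma Xpow_mul {α : Type*} (n : ℕ) (A : Matrix (Fin (2^n)) α ℝ) :
    Xpow n * A = A.submatrix Fin.rev id := by
  ext i j
  rw [mul_apply, Finset.sum_eq_single i.rev]
  · simp [Xpow, Fin.val_rev]
    omega
  · intro k _ hk
    simp only [Xpow, of_apply, ite_mul, one_mul, zero_mul, ite_eq_right_iff]
    intro h
    exact absurd (by ext; simp [Fin.val_rev]; omega) hk
  · simp

lemma Xpow_mul_Cnm (n : ℕ) :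
    Xpow n * Cnm n =
      diagonal fun i : Fin (2^n) => if (i : ℕ) = 0 ∨ (i : ℕ) = 2^n - 1 then 1 else -1 := by
  ext i j
  have := i.isLt
  simp only [Xpow_mul, submatrix_apply, id, Cnm, of_apply, diagonal_apply, Fin.val_rev,
    Fin.ext_iff]
  split_ifs <;> first | rfl | omega

lemma IZ_eq_diagonal (n : ℕ) :
    IZ n = diagonal fun i : Fin (2^n) => if (i : ℕ) % 2 = 0 then 1 else -1 :=
  rfl

lemma Tau0_eq_diagonal (n : ℕ) :
    Tau0 n = diagonal fun i : Fin (2^n) => if (i : ℕ) = 0 then 1 else 0 := by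
  ext i j
  simp only [Tau0, of_apply, diagonal_apply, Fin.ext_iff]
  split_ifs <;> first | rfl | omega

lemma two_pow_sub_one_mod_two {n : ℕ} (hn : 1 ≤ n) : (2^n - 1) % 2 = 1 := by
  have := Nat.one_le_two_pow (n := n)
  have : 2 ∣ 2^n := dvd_pow_self 2 (by omega)
  omega

theorem stmt_9 (n : ℕ) (hn : 1 ≤ n) :
    Tau0 n = (1/4 : ℝ) •
      ((1 : Matrix (Fin (2^n)) (Fin (2^n)) ℝ) + IZ n + Xpow n * Cnm n
        + Xpow n * Cnm n * IZ n) := by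
  have hfactor : ∀ D Z : Matrix (Fin (2^n)) (Fin (2^n)) ℝ,
      1 + Z + D + D * Z = (1 + D) * (1 + Z) := by
    intro D Z
    noncomm_ring
  rw [hfactor, Xpow_mul_Cnm, IZ_eq_diagonal, Tau0_eq_diagonal, ← diagonal_one, diagonal_add,
    diagonal_add, diagonal_mul_diagonal, ← diagonal_smul]
  congr 1
  ext i
  have hodd := two_pow_sub_one_mod_two hn
  simp only [Pi.smul_apply, smul_eq_mul]
  split_ifs <;> first | omega | norm_num
end

section
/- The 2^n × 2^n antisymmetric central-difference matrix D (with (D)_{i,i+1} = 1, (D)_{i+1,i} = -1, and zeros elsewhere) satisfies 2h·D = S_n^† - S_n + (I^{⊗(n-1)} ⊗ Z)·C_n, i.e., the tridiagonal matrix with 1 on the superdiagonal and -1 on the subdiagonal equals S_n^† - S_n + (I^{⊗(n-1)} ⊗ Z)·C_n, where C_n is the matrix with ones at positions (0, 2^n-1) and (2^n-1, 0) only. -/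
open Matrix

/-- The antisymmetric central-difference matrix: `1` on the superdiagonal,
`-1` on the subdiagonal, zeros elsewhere. -/
def Dmat (n : ℕ) : Matrix (Fin (2^n)) (Fin (2^n)) ℝ :=
  Matrix.of fun i j =>
    if (i : ℕ) + 1 = (j : ℕ) then 1
    else if (j : ℕ) + 1 = (i : ℕ) then -1 else 0

/-! The cyclic difference `Sₙᵀ - Sₙ` is `D` plus a wrap-around entry `-1` at `(0, 2ⁿ-1)` and `+1`
at `(2ⁿ-1, 0)`. Since `2ⁿ - 1` is odd, `Z` flips the sign of the lower corner of `Cₙ`, so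
`(I ⊗ Z) Cₙ` carries exactly the opposite corner entries and cancels the wrap-around. -/

lemma add_one_mod_eq_ite {k N : ℕ} (hk : k < N) :
    (k + 1) % N = if k + 1 = N then 0 else k + 1 := by
  split_ifs with h
  · simp [h]
  · exact Nat.mod_eq_of_lt (by omega)

lemma Sn_transpose_sub_Sn_apply (n : ℕ) (i j : Fin (2^n)) :
    ((Sn n)ᵀ - Sn n) i j = Dmat n i j
      + (if (i : ℕ) = 2^n - 1 ∧ (j : ℕ) = 0 then 1 else 0)
      - (if (i : ℕ) = 0 ∧ (j : ℕ) = 2^n - 1 then 1 else 0) := by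
  simp only [Matrix.sub_apply, transpose_apply, Sn, Dmat, of_apply,
    add_one_mod_eq_ite i.isLt, add_one_mod_eq_ite j.isLt]
  have hi := i.isLt
  have hj := j.isLt
  split_ifs <;> first | omega | norm_num

lemma IZ_mul_Cn_apply {n : ℕ} (hn : n ≠ 0) (i j : Fin (2^n)) :
    (IZ n * Cn n) i j = (if (i : ℕ) = 0 ∧ (j : ℕ) = 2^n - 1 then 1 else 0)
      - (if (i : ℕ) = 2^n - 1 ∧ (j : ℕ) = 0 then 1 else 0) := by
  obtain ⟨d, hd⟩ : Even (2^n) := (Nat.even_pow' hn).2 even_two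
  have hpos : 0 < 2^n := Nat.two_pow_pos n
  rw [IZ_eq_diagonal, diagonal_mul]
  simp only [Cn, of_apply]
  split_ifs <;> first | omega | norm_num

theorem stmt_14 (n : ℕ) (hn : 2 ≤ n) :
    Dmat n = (Sn n)ᵀ - Sn n + IZ n * Cn n := by
  ext i j
  rw [Matrix.add_apply, Sn_transpose_sub_Sn_apply, IZ_mul_Cn_apply (by omega)]
  ring
end
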